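/- Let H₊ and H be complex Hilbert spaces, P a closed subspace of H with orthogonal complement P^⊥, ι_P : P → H and ι_{P^⊥} : P^⊥ → H the inclusions, u : H₊ → P a unitary isomorphism, A : P → P^⊥ a Hilbert–Schmidt operator, and k a nonzero real number. Define the bounded operators x := k·(ι_P + (1/2)·ι_{P^⊥}∘A)∘u and X := −(k/2)·ι_{P^⊥}∘A∘u from H₊ to H. Then x*x − X*X = k²·Id_{H₊} and X*x = x*X (both being equal to the self-adjoint operator −(k²/4)·u⁻¹∘A*A∘u). -/

import Mathlib

noncomputable section
namespace Paper
open ContinuousLinearMap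

variable {E F : Type*}
  [NormedAddCommGroup E] [InnerProductSpace ℂ E] [CompleteSpace E]
  [NormedAddCommGroup F] [InnerProductSpace ℂ F] [CompleteSpace F]

/-- `A` is a Hilbert–Schmidt operator: for every (equivalently some) Hilbert basis
the squared norms of the images of basis vectors are summable. -/
def IsHS (A : E →L[ℂ] F) : Prop :=
  ∀ (s : Set E) (b : HilbertBasis s ℂ E), Summable fun i => ‖A (b i)‖ ^ 2

/-- `A` is a trace-class operator: it factors as a composition of two
Hilbert–Schmidt operators. -/
def IsTC (A : E →L[ℂ] F) : Prop :=
  ∃ (B : E →L[ℂ] F) (C : E →L[ℂ] E), IsHS B ∧ IsHS C ∧ A = B ∘L C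


/-- The real continuous functional calculus `f(a)` for (self-adjoint) bounded
operators on a complex Hilbert space. -/
def cfcR (f : ℝ → ℝ) (a : E →L[ℂ] E) : E →L[ℂ] E :=
  letI i1 := IsStarNormal.instContinuousFunctionalCalculus (A := E →L[ℂ] E)
  letI i2 := IsSelfAdjoint.instContinuousFunctionalCalculus (A := E →L[ℂ] E)
  cfc f a

/-- Index set of a chosen Hilbert basis of `E`. -/
def basisIndex (E : Type*) [NormedAddCommGroup E] [InnerProductSpace ℂ E] [CompleteSpace E] :
    Set E :=
  (exists_hilbertBasis ℂ E).choose

/-- A chosen Hilbert basis of `E`. -/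
def stdHB (E : Type*) [NormedAddCommGroup E] [InnerProductSpace ℂ E] [CompleteSpace E] :
    HilbertBasis (basisIndex E) ℂ E :=
  (exists_hilbertBasis ℂ E).choose_spec.choose

/-- The trace of an operator (junk value if not trace class); for trace-class
operators this is independent of the chosen Hilbert basis. -/
def trace (A : E →L[ℂ] E) : ℂ :=
  ∑' i : basisIndex E, (inner ℂ ((stdHB E) i) (A ((stdHB E) i)) : ℂ)

/-- The Hilbert–Schmidt norm (junk value if not Hilbert–Schmidt). -/
def hsNorm (A : E →L[ℂ] F) : ℝ :=
  Real.sqrt (∑' i : basisIndex E, ‖A ((stdHB E) i)‖ ^ 2)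

/-- The trace norm `Tr √(A*A)` (junk value if not trace class), the square root
being given by the continuous functional calculus. -/
def traceNorm (A : E →L[ℂ] F) : ℝ :=
  (trace (cfc Real.sqrt (adjoint A ∘L A))).re

end Paper

/- STATEMENT 11 (from the proof of Theorem `orbus`, surjectivity of `ψ`): for a closed
subspace `P ⊆ H`, a unitary `u : H₊ → P`, a Hilbert–Schmidt `A : P → P^⊥` and `k ≠ 0`,
the operators `x := k(ι_P + ½ι_{P^⊥}A)u` and `X := −(k/2)ι_{P^⊥}Au` satisfy
`x*x − X*X = k²·Id` and `X*x = x*X`, both sides of the latter being equal to the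
self-adjoint operator `−(k²/4)·u⁻¹A*Au`. -/
set_option maxHeartbeats 1000000 in
open Paper ContinuousLinearMap in
theorem statement11
    (Hplus : Type) [NormedAddCommGroup Hplus] [InnerProductSpace ℂ Hplus]
    [CompleteSpace Hplus]
    (H : Type) [NormedAddCommGroup H] [InnerProductSpace ℂ H] [CompleteSpace H]
    (P : Submodule ℂ H) [CompleteSpace P]
    (u : Hplus →L[ℂ] P)
    (hu : adjoint u ∘L u = 1 ∧ u ∘L adjoint u = 1)
    (A : P →L[ℂ] ↥Pᗮ) (hA : IsHS A)
    (k : ℝ) (hk : k ≠ 0)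
    (x X : Hplus →L[ℂ] H)
    (hx : x = (k : ℂ) • ((P.subtypeL + (1 / 2 : ℂ) • (Pᗮ.subtypeL ∘L A)) ∘L u))
    (hX : X = -((k : ℂ) / 2) • (Pᗮ.subtypeL ∘L (A ∘L u))) :
    (adjoint x ∘L x - adjoint X ∘L X = (k : ℂ) ^ 2 • (1 : Hplus →L[ℂ] Hplus)) ∧
    (adjoint X ∘L x = adjoint x ∘L X) ∧
    (adjoint X ∘L x =
      -((k : ℂ) ^ 2 / 4) • (adjoint u ∘L ((adjoint A ∘L A) ∘L u))) ∧
    IsSelfAdjoint (adjoint X ∘L x) := by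
  obtain ⟨hu1, hu2⟩ := hu
  have h1 : adjoint P.subtypeL ∘L P.subtypeL = 1 := by
    ext v; simp [Submodule.adjoint_subtypeL]
  have h2 : adjoint Pᗮ.subtypeL ∘L P.subtypeL = 0 := by
    ext v
    simp [Submodule.adjoint_subtypeL,
      Submodule.starProjection_apply, Submodule.orthogonalProjectionOnto_apply_of_mem_orthogonal
        (Submodule.le_orthogonal_orthogonal P v.2)]
  have h3 : adjoint P.subtypeL ∘L Pᗮ.subtypeL = 0 := by
    ext v
    simp [Submodule.adjoint_subtypeL,
      Submodule.starProjection_apply, Submodule.orthogonalProjectionOnto_apply_of_mem_orthogonal v.2]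
  have h4 : adjoint Pᗮ.subtypeL ∘L Pᗮ.subtypeL = 1 := by
    ext v; simp [Submodule.adjoint_subtypeL]
  have hXx : adjoint X ∘L x =
      -((k : ℂ) ^ 2 / 4) • (adjoint u ∘L ((adjoint A ∘L A) ∘L u)) := by
    rw [hX, hx, LinearIsometryEquiv.map_smulₛₗ, adjoint_comp, adjoint_comp]
    simp only [smul_comp, comp_smul, comp_add, add_comp, LinearIsometryEquiv.map_smulₛₗ,
      comp_assoc]
    rw [← comp_assoc (adjoint Pᗮ.subtypeL) P.subtypeL u, h2,
        ← comp_assoc (adjoint Pᗮ.subtypeL) Pᗮ.subtypeL _, h4]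
    simp only [zero_comp, comp_zero, smul_zero, add_zero, zero_add, id_comp, one_def,
      smul_smul, comp_assoc]
    congr 1
    simp only [map_neg, map_div₀, Complex.conj_ofReal, map_ofNat]
    ring
  have hsaM : IsSelfAdjoint (adjoint u ∘L ((adjoint A ∘L A) ∘L u)) := by
    rw [IsSelfAdjoint, star_eq_adjoint]
    simp only [adjoint_comp, adjoint_adjoint, comp_assoc]
  have hst : star (-((k : ℂ) ^ 2 / 4)) = -((k : ℂ) ^ 2 / 4) := by
    rw [show -((k:ℂ)^2/4) = ((-(k^2/4):ℝ):ℂ) by push_cast; ring, Complex.star_def,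
      Complex.conj_ofReal]
  have hxX : adjoint x ∘L X =
      -((k : ℂ) ^ 2 / 4) • (adjoint u ∘L ((adjoint A ∘L A) ∘L u)) := by
    have h := congrArg ContinuousLinearMap.adjoint hXx
    rw [adjoint_comp, adjoint_adjoint, LinearIsometryEquiv.map_smulₛₗ,
      starRingEnd_apply, hst, ← star_eq_adjoint, hsaM.star_eq] at h
    exact h
  have hXX : adjoint X ∘L X =
      ((k : ℂ) ^ 2 / 4) • (adjoint u ∘L ((adjoint A ∘L A) ∘L u)) := by
    rw [hX, LinearIsometryEquiv.map_smulₛₗ, adjoint_comp, adjoint_comp]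
    simp only [smul_comp, comp_smul, comp_assoc]
    rw [← comp_assoc (adjoint Pᗮ.subtypeL) Pᗮ.subtypeL _, h4]
    simp only [id_comp, one_def, smul_smul, comp_assoc]
    congr 1
    simp only [map_neg, map_div₀, Complex.conj_ofReal, map_ofNat]
    ring
  have hxx : adjoint x ∘L x = (k : ℂ) ^ 2 • (1 : Hplus →L[ℂ] Hplus) +
      ((k : ℂ) ^ 2 / 4) • (adjoint u ∘L ((adjoint A ∘L A) ∘L u)) := by
    rw [hx, LinearIsometryEquiv.map_smulₛₗ, adjoint_comp, map_add,
      LinearIsometryEquiv.map_smulₛₗ, adjoint_comp]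
    simp only [smul_comp, comp_smul, comp_add, add_comp, comp_assoc]
    rw [← comp_assoc (adjoint P.subtypeL) P.subtypeL u, h1,
        ← comp_assoc (adjoint P.subtypeL) Pᗮ.subtypeL _, h3,
        ← comp_assoc (adjoint Pᗮ.subtypeL) P.subtypeL u, h2,
        ← comp_assoc (adjoint Pᗮ.subtypeL) Pᗮ.subtypeL _, h4]
    simp only [zero_comp, comp_zero, smul_zero, add_zero, zero_add, id_comp, one_def,
      smul_smul, comp_assoc, smul_add, hu1]
    have e1 : ((k:ℂ) * (starRingEnd ℂ) (k:ℂ)) = (k:ℂ)^2 := by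
      rw [Complex.conj_ofReal]; ring
    have e2 : ((k:ℂ) * (1 / 2 * ((starRingEnd ℂ) (k:ℂ) * (starRingEnd ℂ) (1 / 2)))) =
        (k:ℂ)^2/4 := by
      rw [Complex.conj_ofReal, map_div₀, map_one, map_ofNat]; ring
    rw [e1, e2]
  refine ⟨?_, by rw [hXx, hxX], hXx, ?_⟩
  · rw [hxx, hXX]; abel
  · rw [hXx, IsSelfAdjoint, star_smul, hst, hsaM.star_eq]
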